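/- arXiv:2410.12044 — 3 statements merged into one kernel-verified Lean document; each statement's English description precedes it below -/
import Mathlib

section
/- Let b ∈ ℂ, T > 0, and φ₀, φ₁ ∈ ℂ. Then there exists a unique twice continuously differentiable function y : [0,T] → ℂ satisfying the boundary value problem −y''(t) − 2i(Im b) y'(t) + |b|² y(t) = 0 for all t ∈ (0,T), y(0) = φ₀, y(T) = φ₁. -/
open MeasureTheory Set

noncomputable section

/-- The second order differential expression `ℒy = -y'' - 2i(Im b)y' + |b|²y`. -/
def Lexpr (b : ℂ) (y y' y'' : ℝ → ℂ) : ℝ → ℂ :=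
  fun t => -(y'' t) - 2 * Complex.I * (b.im : ℂ) * y' t + ((‖b‖ : ℝ) : ℂ) ^ 2 * y t

/-- `f` is absolutely continuous on `[0,T]` with derivative `f' ∈ L²(0,T)`. -/
def IsW1On (T : ℝ) (f f' : ℝ → ℂ) : Prop :=
  IntegrableOn f' (Icc (0:ℝ) T) ∧
  IntegrableOn (fun t => ‖f' t‖ ^ 2) (Icc (0:ℝ) T) ∧
  ∀ t ∈ Icc (0:ℝ) T, f t = f 0 + ∫ s in (0:ℝ)..t, f' s

/-- A twice continuously differentiable solution (with derivative data `Y'`, `Y''`) of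
the interval boundary value problem `-Y'' - 2i(Im b)Y' + |b|²Y = 0` on `(0,T)`,
`Y(0) = φ₀`, `Y(T) = φ₁`. -/
def IsIntervalSolution (b : ℂ) (T : ℝ) (φ0 φ1 : ℂ) (Y Y' Y'' : ℝ → ℂ) : Prop :=
  (∀ t ∈ Icc (0:ℝ) T, HasDerivWithinAt Y (Y' t) (Icc (0:ℝ) T) t) ∧
  (∀ t ∈ Icc (0:ℝ) T, HasDerivWithinAt Y' (Y'' t) (Icc (0:ℝ) T) t) ∧
  ContinuousOn Y'' (Icc (0:ℝ) T) ∧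
  (∀ t ∈ Ioo (0:ℝ) T, Lexpr b Y Y' Y'' t = 0) ∧
  Y 0 = φ0 ∧ Y T = φ1

/-! Since `b - conj b = 2i Im b` and `b conj b = |b|²`, the operator factors as
`ℒ = -(∂ - conj b)(∂ + b)`, so `ℒ y = 0` means `y' + b y = d e^{conj b t}`, i.e.
`y t = (c + d ∫₀ᵗ e^{2 Re b s} ds) e^{-b t}` with `c = y 0` and `d = y' 0 + b y 0`.
Every solution has this form by uniqueness for the initial value problem of the equivalent
linear first order system, and `y T = φ₁` fixes `d` because the integral is positive. -/

open Complex ComplexConjugate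

def integralExp (a t : ℝ) : ℝ := ∫ s in (0 : ℝ)..t, Real.exp (a * s)

lemma integralExp_zero (a : ℝ) : integralExp a 0 = 0 :=
  intervalIntegral.integral_same

lemma integralExp_pos (a : ℝ) {t : ℝ} (ht : 0 < t) : 0 < integralExp a t :=
  intervalIntegral.intervalIntegral_pos_of_pos_on
    ((by fun_prop : Continuous fun s => Real.exp (a * s)).intervalIntegrable _ _)
    (fun s _ => Real.exp_pos _) ht

lemma hasDerivAt_integralExp (a t : ℝ) : HasDerivAt (integralExp a) (Real.exp (a * t)) t :=
  ((by fun_prop : Continuous fun s => Real.exp (a * s)).integral_hasStrictDerivAt 0 t).hasDerivAt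

lemma hasDerivAt_cexp_mul_ofReal (c : ℂ) (t : ℝ) :
    HasDerivAt (fun t : ℝ => cexp (c * t)) (c * cexp (c * t)) t := by
  simpa [mul_comm] using ((hasDerivAt_id (t : ℂ)).const_mul c).cexp.comp_ofReal

def lexprCompanion (b : ℂ) : ℂ × ℂ →L[ℂ] ℂ × ℂ :=
  (ContinuousLinearMap.snd ℂ ℂ ℂ).prod
    (((‖b‖ : ℝ) : ℂ) ^ 2 • ContinuousLinearMap.fst ℂ ℂ ℂ
      - (2 * I * (b.im : ℂ)) • ContinuousLinearMap.snd ℂ ℂ ℂ)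

@[simp]
lemma lexprCompanion_apply (b : ℂ) (p : ℂ × ℂ) :
    lexprCompanion b p = (p.2, ((‖b‖ : ℝ) : ℂ) ^ 2 * p.1 - 2 * I * (b.im : ℂ) * p.2) := rfl

lemma lexpr_eq_zero_iff {b : ℂ} {y y' y'' : ℝ → ℂ} {t : ℝ} :
    Lexpr b y y' y'' t = 0 ↔ (y' t, y'' t) = lexprCompanion b (y t, y' t) := by
  simp only [Lexpr, lexprCompanion_apply, Prod.mk.injEq, true_and]
  constructor <;> intro h <;> linear_combination (-1 : ℂ) * h

def lexprSolution (b c d : ℂ) (t : ℝ) : ℂ :=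
  (c + d * integralExp (2 * b.re) t) * cexp (-b * t)

def lexprSolutionDeriv (b c d : ℂ) (t : ℝ) : ℂ :=
  d * cexp (conj b * t) - b * lexprSolution b c d t

def lexprSolutionDeriv2 (b c d : ℂ) (t : ℝ) : ℂ :=
  d * conj b * cexp (conj b * t) - b * lexprSolutionDeriv b c d t

section lexprSolution

variable (b c d : ℂ)

lemma lexprSolution_zero : lexprSolution b c d 0 = c := by
  simp [lexprSolution, integralExp_zero]

lemma lexprSolutionDeriv_zero : lexprSolutionDeriv b c d 0 = d - b * c := by
  simp [lexprSolutionDeriv, lexprSolution_zero]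

lemma hasDerivAt_lexprSolution (t : ℝ) :
    HasDerivAt (lexprSolution b c d) (lexprSolutionDeriv b c d t) t := by
  have hP := ((hasDerivAt_integralExp (2 * b.re) t).ofReal_comp.const_mul d).const_add c
  refine (hP.fun_mul (hasDerivAt_cexp_mul_ofReal (-b) t)).congr_deriv ?_
  have hre : (2 * b.re : ℂ) - b = conj b := by
    have h := Complex.add_conj b
    push_cast at h
    linear_combination -h
  simp only [lexprSolutionDeriv, lexprSolution, ofReal_exp, ofReal_mul, ofReal_ofNat,
    ← hre, sub_eq_add_neg, add_mul, Complex.exp_add]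
  ring

lemma hasDerivAt_lexprSolutionDeriv (t : ℝ) :
    HasDerivAt (lexprSolutionDeriv b c d) (lexprSolutionDeriv2 b c d t) t := by
  refine (((hasDerivAt_cexp_mul_ofReal (conj b) t).const_mul d).fun_sub
    ((hasDerivAt_lexprSolution b c d t).const_mul b)).congr_deriv ?_
  simp only [lexprSolutionDeriv2]
  ring

lemma continuous_lexprSolutionDeriv2 : Continuous (lexprSolutionDeriv2 b c d) := by
  have h : Continuous (lexprSolutionDeriv b c d) :=
    continuous_iff_continuousAt.2 fun t => (hasDerivAt_lexprSolutionDeriv b c d t).continuousAt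
  unfold lexprSolutionDeriv2
  fun_prop

lemma lexpr_lexprSolution (t : ℝ) :
    Lexpr b (lexprSolution b c d) (lexprSolutionDeriv b c d) (lexprSolutionDeriv2 b c d) t = 0 := by
  have hconj : conj b = b - 2 * I * b.im := by
    have h := Complex.sub_conj b
    push_cast at h
    linear_combination -h
  have hnorm : ((‖b‖ : ℝ) : ℂ) ^ 2 = b * conj b := by
    rw [Complex.mul_conj, Complex.normSq_eq_norm_sq, ofReal_pow]
  simp only [Lexpr, lexprSolutionDeriv2, lexprSolutionDeriv, hnorm, hconj]
  ring

lemma existsUnique_lexprSolution_eq (φ : ℂ) {T : ℝ} (hT : 0 < T) :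
    ∃! d, lexprSolution b c d T = φ := by
  have hslope : (integralExp (2 * b.re) T : ℂ) * cexp (-b * T) ≠ 0 :=
    mul_ne_zero (ofReal_ne_zero.2 (integralExp_pos _ hT).ne') (Complex.exp_ne_zero _)
  have haffine (d : ℂ) : lexprSolution b c d T =
      c * cexp (-b * T) + d * (integralExp (2 * b.re) T * cexp (-b * T)) := by
    rw [lexprSolution]; ring
  refine ⟨(φ - c * cexp (-b * T)) / (integralExp (2 * b.re) T * cexp (-b * T)), ?_,
    fun d hd => ?_⟩
  · dsimp only
    rw [haffine, div_mul_cancel₀ _ hslope]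
    ring
  · rw [eq_div_iff hslope, ← hd, haffine]
    ring

end lexprSolution

def IsLexprSolutionOn (b : ℂ) (s : Set ℝ) (Y Y' Y'' : ℝ → ℂ) : Prop :=
  ∀ t ∈ s, HasDerivWithinAt Y (Y' t) s t ∧ HasDerivWithinAt Y' (Y'' t) s t ∧
    Lexpr b Y Y' Y'' t = 0

lemma isLexprSolutionOn_lexprSolution (b c d : ℂ) (s : Set ℝ) :
    IsLexprSolutionOn b s (lexprSolution b c d) (lexprSolutionDeriv b c d)
      (lexprSolutionDeriv2 b c d) := fun t _ =>
  ⟨(hasDerivAt_lexprSolution b c d t).hasDerivWithinAt,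
    (hasDerivAt_lexprSolutionDeriv b c d t).hasDerivWithinAt, lexpr_lexprSolution b c d t⟩

namespace IsLexprSolutionOn

variable {b : ℂ} {s : Set ℝ} {Y Y' Y'' : ℝ → ℂ}

lemma hasDerivWithinAt_prod (h : IsLexprSolutionOn b s Y Y' Y'') {t : ℝ} (ht : t ∈ s) :
    HasDerivWithinAt (fun t => (Y t, Y' t)) (lexprCompanion b (Y t, Y' t)) s t := by
  obtain ⟨hY, hY', hL⟩ := h t ht
  rw [← lexpr_eq_zero_iff.1 hL]
  exact hY.prodMk hY'

lemma continuousOn_prod (h : IsLexprSolutionOn b s Y Y' Y'') :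
    ContinuousOn (fun t => (Y t, Y' t)) s := fun _ ht =>
  (h.hasDerivWithinAt_prod ht).continuousWithinAt

lemma eqOn_of_eq_of_deriv_eq {t₀ t₁ : ℝ} {Z Z' Z'' : ℝ → ℂ}
    (hY : IsLexprSolutionOn b (Icc t₀ t₁) Y Y' Y'') (hZ : IsLexprSolutionOn b (Icc t₀ t₁) Z Z' Z'')
    (h₀ : Y t₀ = Z t₀) (h₀' : Y' t₀ = Z' t₀) :
    EqOn Y Z (Icc t₀ t₁) := by
  have hderiv {W W' W'' : ℝ → ℂ} (hW : IsLexprSolutionOn b (Icc t₀ t₁) W W' W'') :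
      ∀ t ∈ Ico t₀ t₁, HasDerivWithinAt (fun t => (W t, W' t))
        (lexprCompanion b (W t, W' t)) (Ici t) t := fun t ht =>
    (hW.hasDerivWithinAt_prod (Ico_subset_Icc_self ht)).mono_of_mem_nhdsWithin
      (Icc_mem_nhdsGE_of_mem ht)
  have h := ODE_solution_unique (fun _ => (lexprCompanion b).lipschitz) hY.continuousOn_prod
    (hderiv hY) hZ.continuousOn_prod (hderiv hZ) (Prod.ext h₀ h₀')
  exact fun t ht => congrArg Prod.fst (h ht)

end IsLexprSolutionOn

lemma IsIntervalSolution.isLexprSolutionOn {b : ℂ} {T : ℝ} {φ0 φ1 : ℂ} {Y Y' Y'' : ℝ → ℂ}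
    (h : IsIntervalSolution b T φ0 φ1 Y Y' Y'') (hT : 0 < T) :
    IsLexprSolutionOn b (Icc 0 T) Y Y' Y'' := by
  obtain ⟨hY, hY', hY'', hL, -, -⟩ := h
  have hL_Icc : EqOn (Lexpr b Y Y' Y'') 0 (Icc 0 T) := by
    refine EqOn.of_subset_closure hL ?_ continuousOn_const Ioo_subset_Icc_self (closure_Ioo hT.ne).ge
    have hcY : ContinuousOn Y (Icc 0 T) := fun t ht => (hY t ht).continuousWithinAt
    have hcY' : ContinuousOn Y' (Icc 0 T) := fun t ht => (hY' t ht).continuousWithinAt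
    unfold Lexpr
    fun_prop
  exact fun t ht => ⟨hY t ht, hY' t ht, hL_Icc ht⟩

/-- boundary value problem (3) for the optimal trajectory on the
interval.  For every `b ∈ ℂ`, `T > 0` and `φ₀, φ₁ ∈ ℂ` there is a unique twice
continuously differentiable `Y : [0,T] → ℂ` with
`-Y'' - 2i(Im b)Y' + |b|²Y = 0` on `(0,T)`, `Y(0) = φ₀`, `Y(T) = φ₁`. -/
theorem interval_bvp_exists_unique (b : ℂ) (T : ℝ) (hT : 0 < T) (φ0 φ1 : ℂ) :
    ∃ Y Y' Y'' : ℝ → ℂ, IsIntervalSolution b T φ0 φ1 Y Y' Y'' ∧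
      ∀ Z Z' Z'' : ℝ → ℂ, IsIntervalSolution b T φ0 φ1 Z Z' Z'' →
        ∀ t ∈ Icc (0:ℝ) T, Z t = Y t := by
  obtain ⟨d, hdT, hd_unique⟩ := existsUnique_lexprSolution_eq b φ0 φ1 hT
  have hsol := isLexprSolutionOn_lexprSolution b φ0 d (Icc 0 T)
  refine ⟨lexprSolution b φ0 d, lexprSolutionDeriv b φ0 d, lexprSolutionDeriv2 b φ0 d,
    ⟨fun t ht => (hsol t ht).1, fun t ht => (hsol t ht).2.1,
      (continuous_lexprSolutionDeriv2 b φ0 d).continuousOn,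
      fun t ht => (hsol t (Ioo_subset_Icc_self ht)).2.2, lexprSolution_zero b φ0 d, hdT⟩, ?_⟩
  intro Z Z' Z'' hZ
  have hZ_sol := hZ.isLexprSolutionOn hT
  obtain ⟨-, -, -, -, hZ0, hZT⟩ := hZ
  have hZ_eq : EqOn Z (lexprSolution b φ0 (Z' 0 + b * φ0)) (Icc 0 T) :=
    hZ_sol.eqOn_of_eq_of_deriv_eq (isLexprSolutionOn_lexprSolution _ _ _ _)
      (by rw [lexprSolution_zero, hZ0]) (by rw [lexprSolutionDeriv_zero]; ring)
  rwa [hd_unique _ ((hZ_eq (right_mem_Icc.2 hT.le)).symm.trans hZT)] at hZ_eq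
end
end

section
/- Let b ∈ ℂ, T > 0, φ₀, φ₁ ∈ ℂ, and let y : [0,T] → ℂ be the (unique) twice continuously differentiable solution of −y'' − 2i(Im b) y' + |b|² y = 0 on (0,T) with y(0) = φ₀, y(T) = φ₁. Then for every absolutely continuous z : [0,T] → ℂ with derivative z' ∈ L²(0,T) and z(0) = φ₀, z(T) = φ₁, one has ∫₀ᵀ |y'(t) + b y(t)|² dt ≤ ∫₀ᵀ |z'(t) + b z(t)|² dt, with equality if and only if z = y. Consequently, the optimal control u = y' + by, minimizing the L²(0,T) norm of the control steering the system y' + by = u from y(0) = φ₀ to y(T) = φ₁, exists and is unique. -/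
/-!
The control `u = Y' + bY` of the solution satisfies `u' = conj b · u`, because the operator
factors as `ℒ = (-d/dt + conj b)(d/dt + b)`; hence `u(t) = c e^{conj b · t}`. For a competitor
`z`, put `w = z - Y` and `q = w' + bw`, so that `z' + bz = u + q`. Since
`conj u · q = conj c · (e^{bt} w)'` and `w` vanishes at both ends, `u ⊥ q` in `L²(0,T)` and
`‖z' + bz‖² = ‖u‖² + ‖q‖²`. Finally `q = 0` a.e. iff `e^{bt} w(t) = ∫₀ᵗ e^{bs} q(s) ds` vanishes
identically, i.e. iff `z = Y`.
-/

open MeasureTheory Set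

noncomputable section

open Filter Topology ComplexConjugate

theorem AbsolutelyContinuousOnInterval.comp_isometry {X Y : Type*} [PseudoMetricSpace X]
    [PseudoMetricSpace Y] {f : ℝ → X} {e : X → Y} {a b : ℝ}
    (hf : AbsolutelyContinuousOnInterval f a b) (he : Isometry e) :
    AbsolutelyContinuousOnInterval (e ∘ f) a b := by
  simpa only [AbsolutelyContinuousOnInterval, Function.comp_apply, he.dist_eq] using hf

theorem AbsolutelyContinuousOnInterval.congr {X : Type*} [PseudoMetricSpace X] {f g : ℝ → X}
    {a b : ℝ} (hf : AbsolutelyContinuousOnInterval f a b) (h : EqOn f g (uIcc a b)) :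
    AbsolutelyContinuousOnInterval g a b := by
  refine hf.congr' ?_
  filter_upwards [mem_inf_of_right (mem_principal_self _)] with E hE
  exact Finset.sum_congr rfl fun i hi => by rw [h (hE.1 i hi).1, h (hE.1 i hi).2]

theorem IntervalIntegrable.absolutelyContinuousOnInterval_intervalIntegral_complex
    {f : ℝ → ℂ} {a b c : ℝ} (hf : IntervalIntegrable f volume a b) (hc : c ∈ uIcc a b) :
    AbsolutelyContinuousOnInterval (fun x ↦ ∫ s in c..x, f s) a b := by
  have hre : IntervalIntegrable (fun s => (f s).re) volume a b := ⟨hf.1.re, hf.2.re⟩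
  have him : IntervalIntegrable (fun s => (f s).im) volume a b := ⟨hf.1.im, hf.2.im⟩
  have hI : AbsolutelyContinuousOnInterval (fun _ => Complex.I) a b :=
    contDiffOn_const.absolutelyContinuousOnInterval
  have hac := ((hre.absolutelyContinuousOnInterval_intervalIntegral hc).comp_isometry
    Complex.isometry_ofReal).add
    (((him.absolutelyContinuousOnInterval_intervalIntegral hc).comp_isometry
      Complex.isometry_ofReal).fun_smul hI)
  refine hac.congr fun x hx => ?_
  have hsub : uIcc c x ⊆ uIcc a b := uIcc_subset_uIcc hc hx
  have hre' : IntervalIntegrable (fun s => ((f s).re : ℂ)) volume c x :=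
    ⟨(hre.mono_set hsub).1.ofReal, (hre.mono_set hsub).2.ofReal⟩
  have him' : IntervalIntegrable (fun s => ((f s).im : ℂ)) volume c x :=
    ⟨(him.mono_set hsub).1.ofReal, (him.mono_set hsub).2.ofReal⟩
  simp only [Pi.add_apply, Function.comp_apply, smul_eq_mul,
    ← intervalIntegral.integral_ofReal, ← intervalIntegral.integral_mul_const]
  rw [← intervalIntegral.integral_add hre' (him'.mul_const _)]
  simp only [Complex.re_add_im]

theorem integral_deriv_mul_eq_sub_of_eq_primitive {g g' w w' : ℝ → ℂ} {a b : ℝ}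
    (hg : ∀ t, HasDerivAt g (g' t) t) (hg' : Continuous g')
    (hw' : IntervalIntegrable w' volume a b)
    (hw : ∀ t ∈ uIcc a b, w t = w a + ∫ s in a..t, w' s) :
    ∫ t in a..b, (g' t * w t + g t * w' t) = g b * w b - g a * w a := by
  set W : ℝ → ℂ := fun t => w a + ∫ s in a..t, w' s
  have hWac : AbsolutelyContinuousOnInterval W a b :=
    contDiffOn_const.absolutelyContinuousOnInterval.fun_add
      (hw'.absolutelyContinuousOnInterval_intervalIntegral_complex left_mem_uIcc)
  have hgc : Continuous g := continuous_iff_continuousAt.2 fun t => (hg t).continuousAt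
  have hgac : AbsolutelyContinuousOnInterval g a b := by
    refine ContDiff.contDiffOn (contDiff_one_iff_deriv.2 ⟨fun t => (hg t).differentiableAt, ?_⟩)
      |>.absolutelyContinuousOnInterval
    rwa [show deriv g = g' from funext fun t => (hg t).deriv]
  have hint : IntervalIntegrable (fun t => g' t * W t + g t * w' t) volume a b :=
    (hg'.continuousOn.mul hWac.continuousOn).intervalIntegrable.add
      (hw'.continuousOn_mul hgc.continuousOn)
  -- `g W - ∫ (g' W + g w')` is absolutely continuous with a.e. vanishing derivative
  -- (Lebesgue differentiation), hence constant.
  obtain ⟨C, hC⟩ := (hgac.fun_smul hWac).fun_sub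
    (hint.absolutelyContinuousOnInterval_intervalIntegral_complex left_mem_uIcc)
    |>.const_of_ae_hasDerivAt_zero (by
      filter_upwards [hw'.ae_hasDerivAt_integral, hint.ae_hasDerivAt_integral]
        with x hW hG hx
      exact ((hg x).mul ((hW hx a left_mem_uIcc).const_add (w a))).sub
        (hG hx a left_mem_uIcc) |>.congr_deriv (by ring))
  have hWa : W a = w a := by simp only [W, intervalIntegral.integral_same, add_zero]
  have hWb : W b = w b := (hw b right_mem_uIcc).symm
  have hCa := hC a left_mem_uIcc
  have hCb := hC b right_mem_uIcc
  simp only [smul_eq_mul, intervalIntegral.integral_same, sub_zero, hWa, hWb] at hCa hCb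
  rw [intervalIntegral.integral_congr (g := fun t => g' t * W t + g t * w' t)
    fun t ht => by simp only [hw t ht, W]]
  linear_combination hCa - hCb

theorem ae_eq_zero_of_forall_intervalIntegral_eq_zero {E : Type*} [NormedAddCommGroup E]
    [NormedSpace ℝ E] [CompleteSpace E] {f : ℝ → E} {a b : ℝ}
    (hf : IntervalIntegrable f volume a b) (h : ∀ t ∈ Icc a b, ∫ s in a..t, f s = 0) :
    ∀ᵐ x ∂volume.restrict (Icc a b), f x = 0 := by
  rw [← Measure.restrict_congr_set Ioo_ae_eq_Icc]
  filter_upwards [ae_restrict_of_ae hf.ae_hasDerivAt_integral, ae_restrict_mem measurableSet_Ioo]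
    with x hderiv hx
  have hx' : x ∈ uIcc a b := uIcc_of_le (hx.1.le.trans hx.2.le) ▸ Ioo_subset_Icc_self hx
  refine (hderiv hx' a left_mem_uIcc).unique
    ((hasDerivAt_const x (0 : E)).congr_of_eventuallyEq ?_)
  filter_upwards [Icc_mem_nhds hx.1 hx.2] with t ht using h t ht

theorem eq_mul_cexp_of_hasDerivAt_mul_self {u : ℝ → ℂ} {d : ℂ} {a b : ℝ}
    (hu : ContinuousOn u (Icc a b)) (hderiv : ∀ x ∈ Ioo a b, HasDerivAt u (d * u x) x) :
    ∀ t ∈ Icc a b, u t = u a * Complex.exp (d * (t - a)) := by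
  intro t ht
  set e : ℝ → ℂ := fun s => Complex.exp (-d * (s - a))
  have he : ∀ s, HasDerivAt e (-d * e s) s := fun s => by
    simpa [e, mul_comm] using
      (((hasDerivAt_id (s : ℂ)).sub_const (a : ℂ)).const_mul (-d)).cexp.comp_ofReal
  have hconst : u t * e t - u a * e a = 0 := by
    rw [← intervalIntegral.integral_eq_sub_of_hasDerivAt_of_le (f := fun s => u s * e s)
      (f' := fun _ => 0) ht.1
      ((hu.mono (Icc_subset_Icc_right ht.2)).mul (Continuous.continuousOn (by fun_prop)))
      (fun x hx => ((hderiv x ⟨hx.1, hx.2.trans_le ht.2⟩).mul (he x)).congr_deriv (by ring))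
      intervalIntegrable_const, intervalIntegral.integral_zero]
  have hinv : e t * Complex.exp (d * (t - a)) = 1 := by
    rw [← Complex.exp_add, ← Complex.exp_zero]
    congr 1
    ring
  calc u t = u t * e t * Complex.exp (d * (t - a)) := by rw [mul_assoc, hinv, mul_one]
    _ = u a * Complex.exp (d * (t - a)) := by
      rw [sub_eq_zero.1 hconst]; simp [e]

theorem integral_norm_add_sq_of_integral_conj_mul_eq_zero {α : Type*} [MeasurableSpace α]
    {μ : Measure α} {u v : α → ℂ} (hu : MemLp u 2 μ) (hv : MemLp v 2 μ)
    (h : ∫ x, conj (u x) * v x ∂μ = 0) :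
    ∫ x, ‖u x + v x‖ ^ 2 ∂μ = ∫ x, ‖u x‖ ^ 2 ∂μ + ∫ x, ‖v x‖ ^ 2 ∂μ := by
  have hu2 : Integrable (fun x => ‖u x‖ ^ 2) μ := (memLp_two_iff_integrable_sq_norm hu.1).1 hu
  have hv2 : Integrable (fun x => ‖v x‖ ^ 2) μ := (memLp_two_iff_integrable_sq_norm hv.1).1 hv
  have huv : Integrable (fun x => conj (u x) * v x) μ := hu.star.integrable_mul hv
  have hre : Integrable (fun x => 2 * (conj (u x) * v x).re) μ := huv.re.const_mul 2
  have hcross : ∫ x, 2 * (conj (u x) * v x).re ∂μ = 0 := by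
    rw [integral_const_mul, show ∫ x, (conj (u x) * v x).re ∂μ = _ from integral_re huv, h,
      RCLike.zero_re, mul_zero]
  simp only [norm_add_sq (𝕜 := ℂ), RCLike.inner_apply', RCLike.re_to_complex]
  rw [integral_add (f := fun x => ‖u x‖ ^ 2 + 2 * (conj (u x) * v x).re) (hu2.add hre) hv2,
    integral_add hu2 hre, hcross, add_zero]

theorem ContinuousOn.memLp_two_Icc {f : ℝ → ℂ} {a b : ℝ} (hf : ContinuousOn f (Icc a b)) :
    MemLp f 2 (volume.restrict (Icc a b)) :=
  (memLp_two_iff_integrable_sq_norm (hf.aestronglyMeasurable measurableSet_Icc)).2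
    ((hf.norm.pow 2).integrableOn_compact isCompact_Icc)

theorem isW1On_of_hasDerivWithinAt {T : ℝ} {f f' : ℝ → ℂ}
    (hf : ∀ t ∈ Icc 0 T, HasDerivWithinAt f (f' t) (Icc 0 T) t)
    (hf' : ContinuousOn f' (Icc 0 T)) : IsW1On T f f' := by
  refine ⟨hf'.integrableOn_compact isCompact_Icc,
    (hf'.norm.pow 2).integrableOn_compact isCompact_Icc, fun t ht => ?_⟩
  have hsub : Icc 0 t ⊆ Icc 0 T := Icc_subset_Icc_right ht.2
  rw [intervalIntegral.integral_eq_sub_of_hasDerivAt_of_le ht.1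
    (fun x hx => (hf x (hsub hx)).continuousWithinAt.mono hsub)
    (fun x hx => (hf x (hsub (Ioo_subset_Icc_self hx))).hasDerivAt
      (Icc_mem_nhds hx.1 (hx.2.trans_le ht.2)))
    ((hf'.mono hsub).intervalIntegrable_of_Icc ht.1), add_sub_cancel]

namespace IsW1On

variable {T : ℝ} {f f' g g' : ℝ → ℂ}

theorem intervalIntegrable (hf : IsW1On T f f') {t : ℝ} (ht : t ∈ Icc 0 T) :
    IntervalIntegrable f' volume 0 t :=
  (intervalIntegrable_iff_integrableOn_Icc_of_le ht.1).2
    (hf.1.mono_set (Icc_subset_Icc_right ht.2))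

theorem memLp (hf : IsW1On T f f') : MemLp f' 2 (volume.restrict (Icc 0 T)) :=
  (memLp_two_iff_integrable_sq_norm hf.1.aestronglyMeasurable).2 hf.2.1

theorem continuousOn (hf : IsW1On T f f') (hT : 0 ≤ T) : ContinuousOn f (Icc 0 T) := by
  have hprim := intervalIntegral.continuousOn_primitive_interval'
    (hf.intervalIntegrable ⟨hT, le_rfl⟩) left_mem_uIcc
  rw [uIcc_of_le hT] at hprim
  exact (continuousOn_const.add hprim).congr hf.2.2

theorem sub (hf : IsW1On T f f') (hg : IsW1On T g g') : IsW1On T (f - g) (f' - g') := by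
  refine ⟨hf.1.sub hg.1, (memLp_two_iff_integrable_sq_norm (hf.memLp.sub hg.memLp).1).1
    (hf.memLp.sub hg.memLp), fun t ht => ?_⟩
  simp only [Pi.sub_apply]
  rw [intervalIntegral.integral_sub (hf.intervalIntegrable ht) (hg.intervalIntegrable ht),
    hf.2.2 t ht, hg.2.2 t ht]
  ring

theorem memLp_add_mul (hf : IsW1On T f f') (hT : 0 ≤ T) (b : ℂ) :
    MemLp (fun t => f' t + b * f t) 2 (volume.restrict (Icc 0 T)) :=
  hf.memLp.add ((continuousOn_const.mul (hf.continuousOn hT)).memLp_two_Icc)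

theorem integral_exp_mul_add_mul (hf : IsW1On T f f') (b : ℂ) {t : ℝ} (ht : t ∈ Icc 0 T) :
    ∫ s in 0..t, Complex.exp (b * s) * (f' s + b * f s) = Complex.exp (b * t) * f t - f 0 := by
  have hexp : ∀ s : ℝ, HasDerivAt (fun s : ℝ => Complex.exp (b * s))
      (b * Complex.exp (b * s)) s := fun s => by
    simpa [mul_comm] using ((hasDerivAt_id (s : ℂ)).const_mul b).cexp.comp_ofReal
  have hparts := integral_deriv_mul_eq_sub_of_eq_primitive hexp (by fun_prop)
    (hf.intervalIntegrable ht) fun s hs =>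
      hf.2.2 s (Icc_subset_Icc_right ht.2 (uIcc_of_le ht.1 ▸ hs))
  rw [Complex.ofReal_zero, mul_zero, Complex.exp_zero, one_mul] at hparts
  rw [← hparts]
  exact intervalIntegral.integral_congr fun s _ => by ring

theorem integral_norm_add_mul_sq_eq_zero_iff (hf : IsW1On T f f') (hT : 0 ≤ T) (hf0 : f 0 = 0)
    (b : ℂ) :
    ∫ t in Icc 0 T, ‖f' t + b * f t‖ ^ 2 = 0 ↔ ∀ t ∈ Icc 0 T, f t = 0 := by
  rw [integral_eq_zero_iff_of_nonneg (fun _ => by positivity)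
    ((memLp_two_iff_integrable_sq_norm (hf.memLp_add_mul hT b).1).1 (hf.memLp_add_mul hT b))]
  constructor
  · intro hzero t ht
    have hcontrol : ∀ᵐ s ∂volume.restrict (Icc 0 T), f' s + b * f s = 0 := by
      filter_upwards [hzero] with s hs
      simpa using hs
    have hprod := hf.integral_exp_mul_add_mul b ht
    rw [hf0, sub_zero, intervalIntegral.integral_of_le ht.1, integral_eq_zero_of_ae
      (ae_restrict_of_ae_restrict_of_subset (Ioc_subset_Icc_self.trans
        (Icc_subset_Icc_right ht.2)) (by filter_upwards [hcontrol] with s hs; simp [hs]))] at hprod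
    exact (mul_eq_zero.1 hprod.symm).resolve_left (Complex.exp_ne_zero _)
  · intro hvanish
    have hderiv := ae_eq_zero_of_forall_intervalIntegral_eq_zero
      (hf.intervalIntegrable ⟨hT, le_rfl⟩) fun t ht => by
        simpa only [hvanish t ht, hf0, zero_add, eq_comm (a := (0 : ℂ))] using hf.2.2 t ht
    filter_upwards [hderiv, ae_restrict_mem measurableSet_Icc] with t h't ht
    simp [h't, hvanish t ht]

end IsW1On

theorem Lexpr_eq_conj_mul_sub (b : ℂ) (y y' y'' : ℝ → ℂ) (t : ℝ) :
    Lexpr b y y' y'' t = conj b * (y' t + b * y t) - (y'' t + b * y' t) := by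
  have hconj : conj b = b - 2 * Complex.I * b.im := by
    apply Complex.ext <;> simp
    ring
  simp only [Lexpr, ← Complex.conj_mul', hconj]
  ring

namespace IsIntervalSolution

variable {b : ℂ} {T : ℝ} {φ0 φ1 : ℂ} {Y Y' Y'' : ℝ → ℂ}

theorem isW1On (hY : IsIntervalSolution b T φ0 φ1 Y Y' Y'') : IsW1On T Y Y' :=
  isW1On_of_hasDerivWithinAt hY.1 fun t ht => (hY.2.1 t ht).continuousWithinAt

theorem control_eq_mul_exp (hY : IsIntervalSolution b T φ0 φ1 Y Y' Y'') :
    ∀ t ∈ Icc 0 T, Y' t + b * Y t = (Y' 0 + b * Y 0) * Complex.exp (conj b * t) := by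
  obtain ⟨hY', hY'', -, hL, -⟩ := hY
  have hcontrol : ∀ x ∈ Icc 0 T,
      HasDerivWithinAt (fun s => Y' s + b * Y s) (Y'' x + b * Y' x) (Icc 0 T) x :=
    fun x hx => (hY'' x hx).add ((hY' x hx).const_mul b)
  intro t ht
  simpa using eq_mul_cexp_of_hasDerivAt_mul_self (fun x hx => (hcontrol x hx).continuousWithinAt)
    (fun x hx => by
      refine ((hcontrol x (Ioo_subset_Icc_self hx)).hasDerivAt
        (Icc_mem_nhds hx.1 hx.2)).congr_deriv ?_
      rw [← sub_eq_zero, ← neg_sub, ← Lexpr_eq_conj_mul_sub, hL x hx, neg_zero]) t ht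

theorem integral_conj_control_mul_eq_zero (hY : IsIntervalSolution b T φ0 φ1 Y Y' Y'')
    (hT : 0 ≤ T) {w w' : ℝ → ℂ} (hw : IsW1On T w w') (hw0 : w 0 = 0) (hwT : w T = 0) :
    ∫ t in Icc 0 T, conj (Y' t + b * Y t) * (w' t + b * w t) = 0 := by
  calc ∫ t in Icc 0 T, conj (Y' t + b * Y t) * (w' t + b * w t)
      = ∫ t in Icc 0 T, conj (Y' 0 + b * Y 0) * (Complex.exp (b * t) * (w' t + b * w t)) := by
        refine setIntegral_congr_fun measurableSet_Icc fun t ht => ?_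
        simp only [hY.control_eq_mul_exp t ht, map_mul, ← Complex.exp_conj, Complex.conj_conj,
          Complex.conj_ofReal]
        ring
    _ = conj (Y' 0 + b * Y 0) * (Complex.exp (b * T) * w T - w 0) := by
        rw [integral_const_mul, integral_Icc_eq_integral_Ioc,
          ← intervalIntegral.integral_of_le hT, hw.integral_exp_mul_add_mul b ⟨hT, le_rfl⟩]
    _ = 0 := by rw [hw0, hwT]; ring

end IsIntervalSolution

/-- The solution `Y` of the boundary value problem (3) minimizes the
control norm `‖z' + bz‖_{L²(0,T)}` among all absolutely continuous trajectories `z`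
with `z' ∈ L²(0,T)` steering the system from `φ₀` to `φ₁`, with equality only for
`z = Y`; hence the optimal control exists and is unique. -/
theorem interval_optimal_control (b : ℂ) (T : ℝ) (hT : 0 < T) (φ0 φ1 : ℂ)
    (Y Y' Y'' : ℝ → ℂ) (hY : IsIntervalSolution b T φ0 φ1 Y Y' Y'') :
    ∀ z z' : ℝ → ℂ, IsW1On T z z' → z 0 = φ0 → z T = φ1 →
      (∫ t in Icc (0:ℝ) T, ‖Y' t + b * Y t‖ ^ 2) ≤
        (∫ t in Icc (0:ℝ) T, ‖z' t + b * z t‖ ^ 2) ∧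
      ((∫ t in Icc (0:ℝ) T, ‖Y' t + b * Y t‖ ^ 2) =
          (∫ t in Icc (0:ℝ) T, ‖z' t + b * z t‖ ^ 2) ↔
        ∀ t ∈ Icc (0:ℝ) T, z t = Y t) := by
  intro z z' hz hz0 hzT
  have hw := hz.sub hY.isW1On
  have hw0 : (z - Y) 0 = 0 := by rw [Pi.sub_apply, hz0, hY.2.2.2.2.1, sub_self]
  have hwT : (z - Y) T = 0 := by rw [Pi.sub_apply, hzT, hY.2.2.2.2.2, sub_self]
  have hsplit : ∫ t in Icc 0 T, ‖z' t + b * z t‖ ^ 2 = (∫ t in Icc 0 T, ‖Y' t + b * Y t‖ ^ 2) +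
      ∫ t in Icc 0 T, ‖(z' - Y') t + b * (z - Y) t‖ ^ 2 := by
    have hpyth := integral_norm_add_sq_of_integral_conj_mul_eq_zero
      (hY.isW1On.memLp_add_mul hT.le b) (hw.memLp_add_mul hT.le b)
      (hY.integral_conj_control_mul_eq_zero hT.le hw hw0 hwT)
    beta_reduce at hpyth
    rw [← hpyth]
    congr with t
    congr 2
    simp only [Pi.sub_apply]
    ring
  have hnonneg : 0 ≤ ∫ t in Icc 0 T, ‖(z' - Y') t + b * (z - Y) t‖ ^ 2 :=
    integral_nonneg fun _ => by positivity
  refine ⟨by linarith, ?_⟩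
  rw [hsplit, left_eq_add, hw.integral_norm_add_mul_sq_eq_zero_iff hT.le hw0 b]
  simp only [Pi.sub_apply, sub_eq_zero]
end
end

section
/- Let y ∈ W²_{2,α} be a solution of the boundary value problem ℬ on the tree 𝒯 (with data φ₀, φ₁), and let z = [z_j] ∈ W¹_{2,α} satisfy the matching conditions z_{k_j}(1) = z_j(0) for all j ≥ 2, together with z₁(0) = 0 and z_j(1) = 0 for all j ∈ ℕ₂. Then the first variation of the energy functional vanishes: Σ_{j=1}^∞ α_j ∫₀¹ (y_j'(t) + b_j y_j(t)) · conj(z_j'(t) + b_j z_j(t)) dt = 0. -/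
open MeasureTheory Set

noncomputable section

/-- Encoding of the infinite rooted temporal tree `𝒯` together with the probabilistic data
`θ_l`, `p_l`, the edge coefficients `b_j`, the edge probabilities `p̃_j` and the
weights `α_j`.  Edges are indexed by `j ∈ ℕ`, `j ≥ 1` (the index `0` is unused);
`ℕ₁` is the set of odd indices (internal vertices) and `ℕ₂` the set of even
indices `≥ 2` (boundary vertices other than the root). -/
structure TreeSetup where
  /-- the time horizon -/
  T : ℕ
  hT : 2 ≤ T
  /-- `k j` is the index of the initial vertex of the edge `e_j` -/
  k : ℕ → ℕ
  /-- `nu j = ν_j`, so that the `ν_j`-th iterate of `k` maps `j` to `1` -/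
  nu : ℕ → ℕ
  /-- `enum j l = ν_{j,l}`, the enumeration of `V_j = {ν : k ν = j}` for odd `j` -/
  enum : ℕ → ℕ → ℕ
  /-- the possible values of the random coefficient -/
  θ : ℕ → ℂ
  /-- the probabilities `p_l` -/
  p : ℕ → ℝ
  /-- the edge coefficients `b_j` -/
  b : ℕ → ℂ
  /-- the edge probabilities `p̃_j` -/
  ptil : ℕ → ℝ
  /-- the weights `α_j` -/
  α : ℕ → ℝ
  hk1 : k 1 = 0
  hk_eq_zero : ∀ j, 1 ≤ j → k j = 0 → j = 1
  hk_odd : ∀ j, 2 ≤ j → Odd (k j)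
  henum_ge : ∀ j l, Odd j → 2 ≤ enum j l
  henum_k : ∀ j l, Odd j → k (enum j l) = j
  henum_inj : ∀ j, Odd j → Function.Injective (enum j)
  henum_surj : ∀ j m, Odd j → 2 ≤ m → k m = j → ∃ l, enum j l = m
  htree : ∀ j, 1 ≤ j → k^[nu j] j = 1
  hnu1 : nu 1 = 0
  hnu_rec : ∀ j, 2 ≤ j → nu j = nu (k j) + 1
  hdepth_boundary : ∀ j, 2 ≤ j → Even j → nu j + 1 = T
  hdepth_internal : ∀ j, Odd j → nu j + 1 < T
  hθ_bdd : ∃ M : ℝ, ∀ l, ‖θ l‖ ≤ M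
  hp_pos : ∀ l, 0 < p l
  hp_sum : HasSum p 1
  hb_enum : ∀ j l, Odd j → b (enum j l) = θ l
  hptil_enum : ∀ j l, Odd j → ptil (enum j l) = p l
  hα0 : α 0 = 0
  hα1 : α 1 = 1
  hα_rec : ∀ j, 2 ≤ j → α j = ptil j * α (k j)

/-- `f ∈ W₂¹[0,1]` with derivative `f'`: `f'` is integrable with square-integrable
norm on `[0,1]` and `f` is the indefinite integral of `f'` (so `f` is absolutely
continuous on `[0,1]`). -/
def IsW1 (f f' : ℝ → ℂ) : Prop :=
  IntegrableOn f' (Icc (0:ℝ) 1) ∧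
  IntegrableOn (fun t => ‖f' t‖ ^ 2) (Icc (0:ℝ) 1) ∧
  ∀ t ∈ Icc (0:ℝ) 1, f t = f 0 + ∫ s in (0:ℝ)..t, f' s

/-- `f ∈ W₂²[0,1]` with first derivative `f'` and second derivative `f''`. -/
def IsW2 (f f' f'' : ℝ → ℂ) : Prop := IsW1 f f' ∧ IsW1 f' f''

/-- The squared `L²(0,1)` norm. -/
def sqL2 (f : ℝ → ℂ) : ℝ := ∫ t in Icc (0:ℝ) 1, ‖f t‖ ^ 2

/-- Membership in `L_{2,α} = W⁰_{2,α}`. -/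
def MemL2α (S : TreeSetup) (u : ℕ → ℝ → ℂ) : Prop :=
  (∀ j, 1 ≤ j → IntegrableOn (u j) (Icc (0:ℝ) 1) ∧
      IntegrableOn (fun t => ‖u j t‖ ^ 2) (Icc (0:ℝ) 1)) ∧
  Summable (fun j => S.α j * sqL2 (u j))

/-- Membership in `W¹_{2,α}` (the tuple of derivatives is `y'`). -/
def MemW1α (S : TreeSetup) (y y' : ℕ → ℝ → ℂ) : Prop :=
  (∀ j, 1 ≤ j → IsW1 (y j) (y' j)) ∧
  Summable (fun j => S.α j * (sqL2 (y j) + sqL2 (y' j)))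

/-- Membership in `W²_{2,α}`. -/
def MemW2α (S : TreeSetup) (y y' y'' : ℕ → ℝ → ℂ) : Prop :=
  (∀ j, 1 ≤ j → IsW2 (y j) (y' j) (y'' j)) ∧
  Summable (fun j => S.α j * (sqL2 (y j) + sqL2 (y' j) + sqL2 (y'' j)))

/-- The boundary value problem `ℬ` on the tree `𝒯`: equations `ℒ_j y = 0` on `(0,1)`,
initial condition (9), matching conditions (10), final conditions (11), and the
Kirchhoff-type conditions (14). -/
def SatisfiesBVP (S : TreeSetup) (φ0 φ1 : ℂ) (y y' y'' : ℕ → ℝ → ℂ) : Prop :=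
  MemW2α S y y' y'' ∧
  (∀ j, 1 ≤ j → ∀ᵐ t ∂(volume.restrict (Ioo (0:ℝ) 1)),
      Lexpr (S.b j) (y j) (y' j) (y'' j) t = 0) ∧
  y 1 0 = φ0 ∧
  (∀ j, 2 ≤ j → y (S.k j) 1 = y j 0) ∧
  (∀ j, 2 ≤ j → Even j → y j 1 = φ1) ∧
  (∀ j, Odd j →
    y' j 1 + (S.b j - ∑' l, (S.p l : ℂ) * S.b (S.enum j l)) * y j 1
      = ∑' l, (S.p l : ℂ) * y' (S.enum j l) 0)

/-- Admissible tuples for the variational problem `𝒱`: members of `W¹_{2,α}`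
satisfying (9), (10) and (11). -/
def Admissible (S : TreeSetup) (φ0 φ1 : ℂ) (y y' : ℕ → ℝ → ℂ) : Prop :=
  MemW1α S y y' ∧ y 1 0 = φ0 ∧
  (∀ j, 2 ≤ j → y (S.k j) 1 = y j 0) ∧
  (∀ j, 2 ≤ j → Even j → y j 1 = φ1)

/-- The energy functional `J(y) = Σ_j α_j ∫₀¹ |y_j' + b_j y_j|² dt`. -/
def energy (S : TreeSetup) (y y' : ℕ → ℝ → ℂ) : ℝ :=
  ∑' j, S.α j * sqL2 (fun t => y' j t + S.b j * y j t)

/-!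
On each edge put `u_j = y_j' + b_j y_j`. The equation `ℒ_j y = 0` says exactly that
`u_j' = conj b_j · u_j`, so `u_j · conj (z_j' + b_j z_j)` is the derivative of the absolutely
continuous function `u_j · conj z_j`, and the `j`-th term of the series is
`α_j (u_j(1) conj z_j(1) - u_j(0) conj z_j(0))`. The trace bound `|f(t)|² ≤ 2 (‖f‖² + ‖f'‖²)`
makes both boundary series summable. The terms at `t = 1` vanish on the boundary edges; at an
internal vertex `j`, the Kirchhoff condition, the matching conditions and `α_{ν_{j,l}} = p_l α_j`
turn the term at `t = 1` into the sum over the children `ν_{j,l}` of their terms at `t = 0`.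
As every edge other than `e_1` is a child of exactly one internal vertex and `z_1(0) = 0`, the
two boundary series have the same sum.
-/

open Filter
open scoped ComplexConjugate

namespace AbsolutelyContinuousOnInterval

theorem of_dist_le {X Y : Type*} [PseudoMetricSpace X] [PseudoMetricSpace Y]
    {f : ℝ → X} {g : ℝ → Y} {a b : ℝ} (hg : AbsolutelyContinuousOnInterval g a b)
    (h : ∀ x ∈ uIcc a b, ∀ y ∈ uIcc a b, dist (f x) (f y) ≤ dist (g x) (g y)) :
    AbsolutelyContinuousOnInterval f a b := by
  refine squeeze_zero' (.of_forall fun _ => Finset.sum_nonneg fun _ _ => dist_nonneg) ?_ hg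
  filter_upwards [eventually_inf_principal.mpr (.of_forall fun E hE => hE)] with E hE
  exact Finset.sum_le_sum fun i hi => h _ (hE.1 i hi).1 _ (hE.1 i hi).2

theorem const_add {E : Type*} [NormedAddCommGroup E] {f : ℝ → E} {a b : ℝ}
    (hf : AbsolutelyContinuousOnInterval f a b) (C : E) :
    AbsolutelyContinuousOnInterval (fun x => C + f x) a b :=
  hf.of_dist_le fun x _ y _ => (dist_add_left C (f x) (f y)).le

end AbsolutelyContinuousOnInterval

theorem IntervalIntegrable.absolutelyContinuousOnInterval_integral
    {E : Type*} [NormedAddCommGroup E] [NormedSpace ℝ E] {f : ℝ → E} {a b c : ℝ}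
    (hf : IntervalIntegrable f volume a b) (hc : c ∈ uIcc a b) :
    AbsolutelyContinuousOnInterval (fun x => ∫ t in c..x, f t) a b := by
  refine (hf.norm.absolutelyContinuousOnInterval_intervalIntegral hc).of_dist_le
    fun x hx y hy => ?_
  have hfc : ∀ z ∈ uIcc a b, IntervalIntegrable f volume c z :=
    fun z hz => hf.mono_set (uIcc_subset_uIcc hc hz)
  rw [dist_eq_norm, dist_eq_norm,
    intervalIntegral.integral_interval_sub_left (hfc x hx) (hfc y hy),
    intervalIntegral.integral_interval_sub_left (hfc x hx).norm (hfc y hy).norm, Real.norm_eq_abs]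
  exact intervalIntegral.norm_integral_le_abs_integral_norm

theorem integral_mul_add_mul_eq_sub_of_eq_add_integral {𝕜 : Type*} [RCLike 𝕜]
    {F G f g : ℝ → 𝕜} {a b : ℝ}
    (hf : IntervalIntegrable f volume a b) (hg : IntervalIntegrable g volume a b)
    (hF : ∀ t ∈ uIcc a b, F t = F a + ∫ s in a..t, f s)
    (hG : ∀ t ∈ uIcc a b, G t = G a + ∫ s in a..t, g s) :
    ∫ t in a..b, (f t * G t + F t * g t) = F b * G b - F a * G a := by
  have hFac := (hf.absolutelyContinuousOnInterval_integral left_mem_uIcc).const_add (F a)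
  have hGac := (hg.absolutelyContinuousOnInterval_integral left_mem_uIcc).const_add (G a)
  have hFc : ContinuousOn F (uIcc a b) := hFac.continuousOn.congr hF
  have hGc : ContinuousOn G (uIcc a b) := hGac.continuousOn.congr hG
  have hint : IntervalIntegrable (fun t => f t * G t + F t * g t) volume a b :=
    (hf.mul_continuousOn hGc).add (hg.continuousOn_mul hFc)
  set H : ℝ → 𝕜 := fun t =>
    (F a + ∫ s in a..t, f s) * (G a + ∫ s in a..t, g s) - ∫ s in a..t, (f s * G s + F s * g s)
  have hHac : AbsolutelyContinuousOnInterval H a b :=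
    (hFac.smul hGac).sub (hint.absolutelyContinuousOnInterval_integral left_mem_uIcc)
  have hH' : ∀ᵐ x, x ∈ uIcc a b → HasDerivAt H 0 x := by
    filter_upwards [hf.ae_hasDerivAt_integral, hg.ae_hasDerivAt_integral,
      hint.ae_hasDerivAt_integral] with x hfx hgx hintx hx
    have := (((hfx hx a left_mem_uIcc).const_add (F a)).mul
      ((hgx hx a left_mem_uIcc).const_add (G a))).sub (hintx hx a left_mem_uIcc)
    rwa [← hF x hx, ← hG x hx, sub_self] at this
  obtain ⟨C, hC⟩ := hHac.const_of_ae_hasDerivAt_zero hH'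
  have hHab : H b = H a := (hC b right_mem_uIcc).trans (hC a left_mem_uIcc).symm
  simp only [H, intervalIntegral.integral_same, add_zero, sub_zero, ← hF b right_mem_uIcc,
    ← hG b right_mem_uIcc] at hHab
  linear_combination -hHab

instance : IsProbabilityMeasure (volume.restrict (Icc (0:ℝ) 1)) := ⟨by simp⟩

theorem sq_integral_le_integral_sq {α : Type*} [MeasurableSpace α] {μ : Measure α}
    [IsProbabilityMeasure μ] {f : α → ℝ} (hf : Integrable f μ)
    (hf2 : Integrable (fun x => f x ^ 2) μ) :
    (∫ x, f x ∂μ) ^ 2 ≤ ∫ x, f x ^ 2 ∂μ :=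
  even_two.convexOn_pow.map_integral_le (continuous_pow 2).continuousOn isClosed_univ
    (.of_forall fun _ => mem_univ _) hf hf2

namespace IsW1

variable {f f' : ℝ → ℂ}

theorem intervalIntegrable (h : IsW1 f f') : IntervalIntegrable f' volume 0 1 :=
  (intervalIntegrable_iff_integrableOn_Icc_of_le zero_le_one).mpr h.1

theorem eq_add_integral (h : IsW1 f f') : ∀ t ∈ uIcc 0 1, f t = f 0 + ∫ s in 0..t, f' s := by
  simpa only [uIcc_of_le zero_le_one] using h.2.2

theorem continuousOn (h : IsW1 f f') : ContinuousOn f (Icc 0 1) := by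
  simpa only [uIcc_of_le zero_le_one] using
    ((h.intervalIntegrable.absolutelyContinuousOnInterval_integral left_mem_uIcc).const_add
      (f 0)).continuousOn.congr h.eq_add_integral

theorem norm_sub_le {s t : ℝ} (h : IsW1 f f') (hs : s ∈ Icc (0:ℝ) 1) (ht : t ∈ Icc (0:ℝ) 1) :
    ‖f t - f s‖ ≤ ∫ r in Icc (0:ℝ) 1, ‖f' r‖ := by
  have hsub : ∀ r ∈ Icc (0:ℝ) 1, uIcc 0 r ⊆ uIcc 0 1 := fun r hr =>
    uIcc_subset_uIcc left_mem_uIcc (by rwa [uIcc_of_le zero_le_one])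
  rw [h.2.2 t ht, h.2.2 s hs, add_sub_add_left_eq_sub,
    intervalIntegral.integral_interval_sub_left (h.intervalIntegrable.mono_set (hsub t ht))
      (h.intervalIntegrable.mono_set (hsub s hs))]
  refine intervalIntegral.norm_integral_le_integral_norm_uIoc.trans
      (setIntegral_mono_set h.1.norm (.of_forall fun _ => norm_nonneg _) ?_)
  exact (uIoc_subset_uIcc.trans (uIcc_subset_Icc hs ht)).eventuallyLE

theorem norm_sq_le {t : ℝ} (h : IsW1 f f') (ht : t ∈ Icc (0:ℝ) 1) :
    ‖f t‖ ^ 2 ≤ 2 * (sqL2 f + sqL2 f') := by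
  have hf2 : IntegrableOn (fun s => ‖f s‖ ^ 2) (Icc 0 1) :=
    (h.continuousOn.norm.pow 2).integrableOn_Icc
  obtain ⟨s, hs, hfs : ‖f s‖ ^ 2 ≤ sqL2 f⟩ := exists_notMem_null_le_integral hf2
    (N := (Icc 0 1)ᶜ) (by simp)
  rw [notMem_compl_iff] at hs
  have hf' : (∫ r in Icc (0:ℝ) 1, ‖f' r‖) ^ 2 ≤ sqL2 f' := sq_integral_le_integral_sq h.1.norm h.2.1
  have hts : ‖f t‖ ≤ ‖f s‖ + ∫ r in Icc (0:ℝ) 1, ‖f' r‖ :=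
    (norm_le_insert' _ (f s)).trans (add_le_add_right (h.norm_sub_le hs ht) _)
  nlinarith [pow_le_pow_left₀ (norm_nonneg _) hts 2,
    sq_nonneg (‖f s‖ - ∫ r in Icc (0:ℝ) 1, ‖f' r‖)]

end IsW1

theorem IsW1.conj {f f' : ℝ → ℂ} (h : IsW1 f f') :
    IsW1 (fun t => conj (f t)) (fun t => conj (f' t)) := by
  refine ⟨Complex.conjCLE.toContinuousLinearMap.integrable_comp h.1, by simpa using h.2.1,
    fun t ht => ?_⟩
  beta_reduce
  rw [intervalIntegral.intervalIntegral_conj, ← map_add, ← h.2.2 t ht]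

theorem lexpr_eq (b : ℂ) (f f' f'' : ℝ → ℂ) (t : ℝ) :
    Lexpr b f f' f'' t = conj b * (f' t + b * f t) - (f'' t + b * f' t) := by
  have h2 : b - conj b = 2 * Complex.I * b.im := by rw [Complex.sub_conj]; push_cast; ring
  simp only [Lexpr, ← Complex.conj_mul']
  linear_combination (f' t) * h2

theorem IsW2.integral_mul_conj_eq_sub {b : ℂ} {f f' f'' g g' : ℝ → ℂ} (hf : IsW2 f f' f'')
    (hg : IsW1 g g') (hL : ∀ᵐ t ∂(volume.restrict (Ioo (0:ℝ) 1)), Lexpr b f f' f'' t = 0) :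
    ∫ t in Icc (0:ℝ) 1, (f' t + b * f t) * conj (g' t + b * g t)
      = (f' 1 + b * f 1) * conj (g 1) - (f' 0 + b * f 0) * conj (g 0) := by
  have hu : IntervalIntegrable (fun t => f'' t + b * f' t) volume 0 1 :=
    hf.2.intervalIntegrable.add (hf.1.intervalIntegrable.const_mul b)
  have hu_eq : ∀ t ∈ uIcc 0 1,
      f' t + b * f t = f' 0 + b * f 0 + ∫ s in 0..t, (f'' s + b * f' s) := by
    intro t ht
    rw [intervalIntegral.integral_add (hf.2.intervalIntegrable.mono_set ?_)
      ((hf.1.intervalIntegrable.mono_set ?_).const_mul b), intervalIntegral.integral_const_mul,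
      hf.2.eq_add_integral t ht, hf.1.eq_add_integral t ht]
    · ring
    all_goals exact uIcc_subset_uIcc left_mem_uIcc ht
  rw [← integral_mul_add_mul_eq_sub_of_eq_add_integral hu hg.conj.intervalIntegrable hu_eq
    hg.conj.eq_add_integral, intervalIntegral.integral_of_le zero_le_one,
    integral_Icc_eq_integral_Ioc]
  refine setIntegral_congr_ae measurableSet_Ioc ?_
  rw [← ae_restrict_iff' measurableSet_Ioc, ← Measure.restrict_congr_set Ioo_ae_eq_Ioc]
  filter_upwards [hL] with t ht
  rw [lexpr_eq, sub_eq_zero] at ht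
  rw [← ht, map_add, map_mul]
  ring

namespace TreeSetup

variable (S : TreeSetup)

theorem exists_enum_eq {j : ℕ} (hj : 2 ≤ j) : ∃ l, S.enum (S.k j) l = j :=
  S.henum_surj (S.k j) j (S.hk_odd j hj) hj rfl

theorem ptil_pos {j : ℕ} (hj : 2 ≤ j) : 0 < S.ptil j := by
  obtain ⟨l, hl⟩ := S.exists_enum_eq hj
  rw [← hl, S.hptil_enum _ _ (S.hk_odd j hj)]
  exact S.hp_pos l

theorem α_pos {j : ℕ} (hj : 1 ≤ j) : 0 < S.α j := by
  induction hn : S.nu j generalizing j with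
  | zero =>
    rcases hj.eq_or_lt with rfl | hj2
    · simp [S.hα1]
    · have := S.hnu_rec j hj2
      omega
  | succ n ih =>
    rcases hj.eq_or_lt with rfl | hj2
    · simp [S.hα1]
    · have := S.hnu_rec j hj2
      rw [S.hα_rec j hj2]
      exact mul_pos (S.ptil_pos hj2) (ih (S.hk_odd j hj2).pos (by omega))

theorem α_nonneg (j : ℕ) : 0 ≤ S.α j := by
  rcases j.eq_zero_or_pos with rfl | hj
  · exact S.hα0.ge
  · exact (S.α_pos hj).le

theorem α_enum {j : ℕ} (hj : Odd j) (l : ℕ) : S.α (S.enum j l) = S.p l * S.α j := by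
  rw [S.hα_rec _ (S.henum_ge j l hj), S.henum_k j l hj, S.hptil_enum j l hj]

theorem exists_norm_b_le : ∃ K, ∀ j, ‖S.b j‖ ≤ K := by
  obtain ⟨M, hM⟩ := S.hθ_bdd
  refine ⟨max (max ‖S.b 0‖ ‖S.b 1‖) M, fun j => ?_⟩
  rcases lt_or_ge j 2 with hj | hj
  · interval_cases j <;> simp
  · obtain ⟨l, hl⟩ := S.exists_enum_eq hj
    rw [← hl, S.hb_enum _ _ (S.hk_odd j hj)]
    exact le_max_of_le_right (hM l)

theorem injective_enum_odd : Function.Injective fun q : ℕ × ℕ => S.enum (2 * q.1 + 1) q.2 := by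
  rintro ⟨a, l⟩ ⟨a', l'⟩ h
  have hk := congrArg S.k h
  simp only [S.henum_k _ _ ⟨_, rfl⟩] at hk
  obtain rfl : a = a' := by omega
  exact Prod.ext rfl (S.henum_inj _ ⟨a, rfl⟩ h)

theorem range_enum_odd {m : ℕ} (hm : 2 ≤ m) :
    m ∈ range fun q : ℕ × ℕ => S.enum (2 * q.1 + 1) q.2 := by
  obtain ⟨a, ha⟩ := S.hk_odd m hm
  obtain ⟨l, hl⟩ := S.exists_enum_eq hm
  exact ⟨(a, l), by simp only [← ha, hl]⟩

theorem tsum_eq_tsum_of_eq_tsum_enum {E : Type*} [NormedAddCommGroup E] [CompleteSpace E]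
    {A B : ℕ → E} (hB : Summable B) (hA : ∀ j, ¬Odd j → A j = 0) (hB0 : B 0 = 0) (hB1 : B 1 = 0)
    (hAB : ∀ j, Odd j → A j = ∑' l, B (S.enum j l)) :
    ∑' j, A j = ∑' j, B j := by
  have hodd : Function.support A ⊆ range fun a => 2 * a + 1 := fun j hj =>
    (not_not.mp (mt (hA j) hj)).imp fun a ha => ha.symm
  have hsupp : Function.support B ⊆ range fun q : ℕ × ℕ => S.enum (2 * q.1 + 1) q.2 := by
    intro m hm
    refine S.range_enum_odd ?_
    by_contra! h
    interval_cases m <;> simp_all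
  have hBe := hB.comp_injective S.injective_enum_odd
  calc ∑' j, A j = ∑' a, A (2 * a + 1) :=
        ((strictMono_mul_left_of_pos two_pos).add_const 1 |>.injective.tsum_eq hodd).symm
    _ = ∑' a, ∑' l, B (S.enum (2 * a + 1) l) := tsum_congr fun a => hAB _ ⟨a, rfl⟩
    _ = ∑' q : ℕ × ℕ, B (S.enum (2 * q.1 + 1) q.2) := (hBe.tsum_prod' hBe.prod_factor).symm
    _ = ∑' m, B m := S.injective_enum_odd.tsum_eq hsupp

end TreeSetup

theorem sqL2_nonneg (f : ℝ → ℂ) : 0 ≤ sqL2 f :=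
  integral_nonneg fun _ => sq_nonneg _

theorem summable_mul_mul_of_summable_mul_sq {ι : Type*} {w a c : ι → ℝ} (hw : ∀ i, 0 ≤ w i)
    (ha : Summable fun i => w i * a i ^ 2) (hc : Summable fun i => w i * c i ^ 2) :
    Summable fun i => w i * (a i * c i) := by
  refine (ha.add hc).of_norm_bounded fun i => ?_
  rw [Real.norm_eq_abs, abs_mul, abs_of_nonneg (hw i), ← mul_add]
  refine mul_le_mul_of_nonneg_left (abs_le.mpr ⟨?_, ?_⟩) (hw i) <;>
    nlinarith [sq_nonneg (a i + c i), sq_nonneg (a i - c i)]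

namespace MemW1α

variable {S : TreeSetup} {y y' : ℕ → ℝ → ℂ}

theorem summable_mul_norm_sq (h : MemW1α S y y') {t : ℝ} (ht : t ∈ Icc (0:ℝ) 1) :
    Summable fun j => S.α j * ‖y j t‖ ^ 2 := by
  refine .of_nonneg_of_le (fun j => mul_nonneg (S.α_nonneg j) (sq_nonneg _)) (fun j => ?_)
    (h.2.mul_left 2)
  rcases j.eq_zero_or_pos with rfl | hj
  · simp [S.hα0]
  · rw [mul_left_comm]
    exact mul_le_mul_of_nonneg_left ((h.1 j hj).norm_sq_le ht) (S.α_nonneg j)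

end MemW1α

namespace MemW2α

variable {S : TreeSetup} {y y' y'' : ℕ → ℝ → ℂ}

theorem memW1α (h : MemW2α S y y' y'') : MemW1α S y y' :=
  ⟨fun j hj => (h.1 j hj).1, .of_nonneg_of_le
    (fun j => mul_nonneg (S.α_nonneg j) (add_nonneg (sqL2_nonneg _) (sqL2_nonneg _)))
    (fun j => mul_le_mul_of_nonneg_left (le_add_of_nonneg_right (sqL2_nonneg _)) (S.α_nonneg j))
    h.2⟩

theorem memW1α_deriv (h : MemW2α S y y' y'') : MemW1α S y' y'' :=
  ⟨fun j hj => (h.1 j hj).2, .of_nonneg_of_le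
    (fun j => mul_nonneg (S.α_nonneg j) (add_nonneg (sqL2_nonneg _) (sqL2_nonneg _)))
    (fun j => mul_le_mul_of_nonneg_left (by linarith [sqL2_nonneg (y j)]) (S.α_nonneg j))
    h.2⟩

theorem summable_mul_norm_add_mul_sq (h : MemW2α S y y' y'') {t : ℝ} (ht : t ∈ Icc (0:ℝ) 1) :
    Summable fun j => S.α j * ‖y' j t + S.b j * y j t‖ ^ 2 := by
  obtain ⟨K, hK⟩ := S.exists_norm_b_le
  refine .of_nonneg_of_le (fun j => mul_nonneg (S.α_nonneg j) (sq_nonneg _)) (fun j => ?_)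
    (((h.memW1α_deriv.summable_mul_norm_sq ht).mul_left 2).add
      ((h.memW1α.summable_mul_norm_sq ht).mul_left (2 * K ^ 2)))
  have hb : ‖S.b j‖ ≤ K := hK j
  have hnorm : ‖y' j t + S.b j * y j t‖ ≤ ‖y' j t‖ + K * ‖y j t‖ :=
    (norm_add_le _ _).trans (by rw [norm_mul]; gcongr)
  have := S.α_nonneg j
  nlinarith [pow_le_pow_left₀ (norm_nonneg _) hnorm 2, sq_nonneg (‖y' j t‖ - K * ‖y j t‖),
    mul_nonneg this (sq_nonneg (‖y' j t‖ - K * ‖y j t‖))]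

end MemW2α

namespace TreeSetup

variable (S : TreeSetup)

theorem summable_p_mul_b (j : ℕ) : Summable fun l => (S.p l : ℂ) * S.b (S.enum j l) := by
  obtain ⟨K, hK⟩ := S.exists_norm_b_le
  refine (S.hp_sum.summable.mul_right K).of_norm_bounded fun l => ?_
  rw [norm_mul, Complex.norm_real, Real.norm_of_nonneg (S.hp_pos l).le]
  exact mul_le_mul_of_nonneg_left (hK _) (S.hp_pos l).le

theorem summable_p_mul_apply {y y' : ℕ → ℝ → ℂ} (hy : MemW1α S y y') {j : ℕ} (hj : Odd j)
    {t : ℝ} (ht : t ∈ Icc (0:ℝ) 1) : Summable fun l => (S.p l : ℂ) * y (S.enum j l) t := by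
  have hpy : Summable fun l => S.p l * ‖y (S.enum j l) t‖ ^ 2 := by
    refine (((hy.summable_mul_norm_sq ht).comp_injective (S.henum_inj j hj)).mul_left
      (S.α j)⁻¹).congr fun l => ?_
    simp only [Function.comp_apply, S.α_enum hj]
    field_simp [(S.α_pos hj.pos).ne']
  refine (summable_mul_mul_of_summable_mul_sq (c := fun _ => 1) (fun l => (S.hp_pos l).le) hpy
    (by simpa using S.hp_sum.summable)).of_norm_bounded fun l => ?_
  rw [norm_mul, Complex.norm_real, Real.norm_of_nonneg (S.hp_pos l).le, mul_one]

theorem add_mul_eq_tsum_of_kirchhoff {y y' y'' : ℕ → ℝ → ℂ} (hy : MemW2α S y y' y'')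
    (hmatch : ∀ j, 2 ≤ j → y (S.k j) 1 = y j 0) {j : ℕ} (hj : Odd j)
    (hK : y' j 1 + (S.b j - ∑' l, (S.p l : ℂ) * S.b (S.enum j l)) * y j 1
      = ∑' l, (S.p l : ℂ) * y' (S.enum j l) 0) :
    y' j 1 + S.b j * y j 1
      = ∑' l, (S.p l : ℂ) * (y' (S.enum j l) 0 + S.b (S.enum j l) * y (S.enum j l) 0) := by
  have hy0 : ∀ l, y (S.enum j l) 0 = y j 1 := fun l => by
    rw [← hmatch _ (S.henum_ge j l hj), S.henum_k j l hj]
  simp_rw [hy0, mul_add, ← mul_assoc]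
  rw [(S.summable_p_mul_apply hy.memW1α_deriv hj ⟨le_rfl, zero_le_one⟩).tsum_add
    ((S.summable_p_mul_b j).mul_right _), tsum_mul_right]
  linear_combination hK

end TreeSetup

/-- If `y` solves the boundary value problem `ℬ` and `z ∈ W¹_{2,α}`
satisfies the matching conditions together with the homogeneous boundary conditions
`z₁(0) = 0`, `z_j(1) = 0` (`j ∈ ℕ₂`), then the first variation of the energy
functional vanishes. -/
theorem first_variation_vanishes (S : TreeSetup) (φ0 φ1 : ℂ)
    (y y' y'' z z' : ℕ → ℝ → ℂ)
    (hy : SatisfiesBVP S φ0 φ1 y y' y'')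
    (hz : MemW1α S z z')
    (hz0 : z 1 0 = 0)
    (hzmatch : ∀ j, 2 ≤ j → z (S.k j) 1 = z j 0)
    (hz1 : ∀ j, 2 ≤ j → Even j → z j 1 = 0) :
    ∑' j, (S.α j : ℂ) * ∫ t in Icc (0:ℝ) 1,
        (y' j t + S.b j * y j t) * (starRingEnd ℂ) (z' j t + S.b j * z j t) = 0 := by
  obtain ⟨hyW, hL, -, hymatch, -, hkirch⟩ := hy
  set boundary : ℝ → ℕ → ℂ := fun t j => S.α j * ((y' j t + S.b j * y j t) * conj (z j t))
  have hsum : ∀ t ∈ Icc (0:ℝ) 1, Summable (boundary t) := fun t ht =>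
    (summable_mul_mul_of_summable_mul_sq S.α_nonneg (hyW.summable_mul_norm_add_mul_sq ht)
      (hz.summable_mul_norm_sq ht)).of_norm_bounded fun j => by
      rw [norm_mul, norm_mul, Complex.norm_conj, Complex.norm_real,
        Real.norm_of_nonneg (S.α_nonneg j)]
  have hedge : ∀ j, (S.α j : ℂ) * ∫ t in Icc (0:ℝ) 1,
      (y' j t + S.b j * y j t) * conj (z' j t + S.b j * z j t) = boundary 1 j - boundary 0 j := by
    intro j
    rcases j.eq_zero_or_pos with rfl | hj
    · simp [boundary, S.hα0]
    · rw [(hyW.1 j hj).integral_mul_conj_eq_sub (hz.1 j hj) (hL j hj), mul_sub]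
  rw [tsum_congr hedge, (hsum 1 ⟨zero_le_one, le_rfl⟩).tsum_sub (hsum 0 ⟨le_rfl, zero_le_one⟩),
    sub_eq_zero]
  refine S.tsum_eq_tsum_of_eq_tsum_enum (hsum 0 ⟨le_rfl, zero_le_one⟩) (fun j hj => ?_)
    (by simp [boundary, S.hα0]) (by simp [boundary, hz0]) (fun j hj => ?_)
  · rcases j.eq_zero_or_pos with rfl | hj0
    · simp [boundary, S.hα0]
    · obtain ⟨c, rfl⟩ := Nat.not_odd_iff_even.mp hj
      simp [boundary, hz1 (c + c) (by omega) ⟨c, rfl⟩]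
  · have hzν : ∀ l, z (S.enum j l) 0 = z j 1 := fun l => by
      rw [← hzmatch _ (S.henum_ge j l hj), S.henum_k j l hj]
    simp only [boundary, S.α_enum hj, hzν,
      S.add_mul_eq_tsum_of_kirchhoff hyW hymatch hj (hkirch j hj)]
    rw [← tsum_mul_right, ← tsum_mul_left]
    exact tsum_congr fun l => by push_cast; ring
end
end
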